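/- arXiv:cs/0602030 — 8 statements merged into one kernel-verified Lean document; each statement's English description precedes it below -/
import Mathlib

section
/- Let K, L, N, M be positive integers and let A_0, …, A_{2K−1} be complex L×N matrices. For x ∈ ℝ^{2K} set S(x) = Σ_{k=0}^{K−1} (x_{2k}·A_{2k} + x_{2k+1}·A_{2k+1}) and T_k(x) = x_{2k}·A_{2k} + x_{2k+1}·A_{2k+1}. Then the identity ‖V − S(x)·H‖² = Σ_{k=0}^{K−1} ‖V − T_k(x)·H‖² − (K−1)·‖V‖² holds for all V ∈ ℂ^{L×M}, all H ∈ ℂ^{N×M} and all x ∈ ℝ^{2K} if and only if Aᴴ_k·A_l + Aᴴ_l·A_k = 0 for every pair of indices 0 ≤ k ≠ l ≤ 2K−1 except the pairs of the form {k, l} = {2m, 2m+1} with 0 ≤ m ≤ K−1. -/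
/-!
With `⟪X, Y⟫ = Re tr(Xᴴ Y)` we have `‖X‖² = ⟪X, X⟫`, and expanding both sides shows that the
identity is equivalent, whatever `V` is, to the Pythagorean relation
`‖Σₖ Tₖ(x) H‖² = Σₖ ‖Tₖ(x) H‖²`. Since `2⟪P H, Q H⟫ = Re tr(Hᴴ (PᴴQ + QᴴP) H)`, the relation holds
for every `x` once the anticommutation conditions hold. Conversely, an `x` supported on two
indices `k, l` of different symbols isolates `⟪A_k H, A_l H⟫ = 0` for all `H`; for `H` with all
columns equal to `u` this says that the Hermitian form of `A_kᴴ A_l + A_lᴴ A_k` vanishes at `u`,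
so the matrix is zero.
-/

open Matrix Finset

/-- Squared Frobenius norm of a complex matrix. -/
noncomputable def frobSq {m n : Type*} [Fintype m] [Fintype n] (M : Matrix m n ℂ) : ℝ :=
  ∑ i, ∑ j, ‖M i j‖ ^ 2

noncomputable def reInner {m n : Type*} [Fintype m] [Fintype n] (A B : Matrix m n ℂ) : ℝ :=
  (trace (Aᴴ * B)).re

section reInner

variable {m n : Type*} [Fintype m] [Fintype n]

lemma reInner_comm (A B : Matrix m n ℂ) : reInner A B = reInner B A := by
  rw [reInner, reInner, ← conjTranspose_conjTranspose A, ← conjTranspose_mul, trace_conjTranspose,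
    conjTranspose_conjTranspose, Complex.star_def, Complex.conj_re]

lemma reInner_add_right (A B C : Matrix m n ℂ) :
    reInner A (B + C) = reInner A B + reInner A C := by
  simp only [reInner, Matrix.mul_add, trace_add, Complex.add_re]

lemma reInner_sub_right (A B C : Matrix m n ℂ) :
    reInner A (B - C) = reInner A B - reInner A C := by
  simp only [reInner, Matrix.mul_sub, trace_sub, Complex.sub_re]

lemma reInner_sum_right {ι : Type*} (s : Finset ι) (A : Matrix m n ℂ) (T : ι → Matrix m n ℂ) :
    reInner A (∑ i ∈ s, T i) = ∑ i ∈ s, reInner A (T i) := by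
  simp only [reInner, Matrix.mul_sum, trace_sum, Complex.re_sum]

lemma reInner_sum_left {ι : Type*} (s : Finset ι) (A : Matrix m n ℂ) (T : ι → Matrix m n ℂ) :
    reInner (∑ i ∈ s, T i) A = ∑ i ∈ s, reInner (T i) A := by
  simp only [reInner_comm _ A, reInner_sum_right]

lemma frobSq_eq_reInner_self (A : Matrix m n ℂ) : frobSq A = reInner A A := by
  rw [frobSq, reInner, trace, Complex.re_sum, Finset.sum_comm]
  refine Finset.sum_congr rfl fun j _ => ?_
  simp only [Matrix.diag, mul_apply, conjTranspose_apply, Complex.re_sum, Complex.star_def,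
    Complex.conj_mul', ← Complex.ofReal_pow, Complex.ofReal_re]

lemma frobSq_add (A B : Matrix m n ℂ) :
    frobSq (A + B) = frobSq A + 2 * reInner A B + frobSq B := by
  simp only [frobSq_eq_reInner_self, reInner_add_right, reInner_comm (A + B), reInner_comm B A]
  ring

lemma frobSq_sub (A B : Matrix m n ℂ) :
    frobSq (A - B) = frobSq A - 2 * reInner A B + frobSq B := by
  simp only [frobSq_eq_reInner_self, reInner_sub_right, reInner_comm (A - B), reInner_comm B A]
  ring

lemma frobSq_sum_of_pairwise {ι : Type*} (s : Finset ι) (T : ι → Matrix m n ℂ)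
    (h : (s : Set ι).Pairwise fun i j => reInner (T i) (T j) = 0) :
    frobSq (∑ i ∈ s, T i) = ∑ i ∈ s, frobSq (T i) := by
  rw [frobSq_eq_reInner_self, reInner_sum_left]
  refine Finset.sum_congr rfl fun i hi => ?_
  rw [reInner_sum_right, frobSq_eq_reInner_self,
    sum_eq_single_of_mem i hi fun j hj hji => h hi hj hji.symm]

lemma frobSq_sub_sum_eq_iff {ι : Type*} (s : Finset ι) (V : Matrix m n ℂ)
    (T : ι → Matrix m n ℂ) :
    frobSq (V - ∑ i ∈ s, T i) = ∑ i ∈ s, frobSq (V - T i) - ((#s : ℝ) - 1) * frobSq V ↔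
      frobSq (∑ i ∈ s, T i) = ∑ i ∈ s, frobSq (T i) := by
  simp only [frobSq_sub, reInner_sum_right, sum_add_distrib, sum_sub_distrib, sum_const,
    nsmul_eq_mul, ← mul_sum]
  constructor <;> intro h <;> linarith

end reInner

lemma Matrix.IsHermitian.eq_zero_of_re_star_dotProduct_mulVec_self {n : Type*} [Fintype n]
    [DecidableEq n] {B : Matrix n n ℂ} (hB : B.IsHermitian)
    (h : ∀ u : n → ℂ, (star u ⬝ᵥ B *ᵥ u).re = 0) : B = 0 := by
  have hT := (inner_map_self_eq_zero (toEuclideanLin B)).mp fun x => by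
    rw [EuclideanSpace.inner_eq_star_dotProduct, dotProduct_comm, star_dotProduct, star_eq_zero]
    exact Complex.ext (h x.ofLp) (hB.im_star_dotProduct_mulVec_self x.ofLp)
  simpa using hT

section

variable {l n o : Type*} [Fintype l] [Fintype n] [Fintype o]

lemma two_mul_reInner_mul_mul (P Q : Matrix l n ℂ) (H : Matrix n o ℂ) :
    2 * reInner (P * H) (Q * H) = (trace (Hᴴ * (Pᴴ * Q + Qᴴ * P) * H)).re := by
  rw [two_mul]
  nth_rewrite 2 [reInner_comm]
  simp only [reInner, ← Complex.add_re, ← trace_add, conjTranspose_mul, Matrix.mul_add,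
    Matrix.add_mul, Matrix.mul_assoc]

lemma trace_conjTranspose_replicateCol_mul_replicateCol (B : Matrix n n ℂ) (u : n → ℂ) :
    trace ((replicateCol o u)ᴴ * B * replicateCol o u) = Fintype.card o * (star u ⬝ᵥ B *ᵥ u) := by
  rw [conjTranspose_replicateCol, Matrix.mul_assoc, ← replicateCol_mulVec,
    replicateRow_mul_replicateCol]
  simp [trace]

lemma forall_reInner_mul_mul_eq_zero_iff [DecidableEq n] [Nonempty o] (P Q : Matrix l n ℂ) :
    (∀ H : Matrix n o ℂ, reInner (P * H) (Q * H) = 0) ↔ Pᴴ * Q + Qᴴ * P = 0 := by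
  refine ⟨fun h => ?_, fun h H => by simpa [h] using two_mul_reInner_mul_mul P Q H⟩
  have hB : (Pᴴ * Q + Qᴴ * P).IsHermitian := by
    simp [IsHermitian, conjTranspose_add, conjTranspose_mul, add_comm]
  refine hB.eq_zero_of_re_star_dotProduct_mulVec_self fun u => ?_
  have hu := two_mul_reInner_mul_mul P Q (replicateCol o u)
  rw [h, trace_conjTranspose_replicateCol_mul_replicateCol] at hu
  simpa [Complex.mul_re] using hu.symm

end

noncomputable def designTerm {l n : Type*} (A : ℕ → Matrix l n ℂ) (x : ℕ → ℝ) (k : ℕ) :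
    Matrix l n ℂ :=
  (x (2*k) : ℂ) • A (2*k) + (x (2*k+1) : ℂ) • A (2*k+1)

section designTerm

variable {l n : Type*} (A : ℕ → Matrix l n ℂ)

lemma designTerm_add (x y : ℕ → ℝ) (k : ℕ) :
    designTerm A (x + y) k = designTerm A x k + designTerm A y k := by
  simp only [designTerm, Pi.add_apply, Complex.ofReal_add, add_smul]
  abel

lemma designTerm_single (j k : ℕ) :
    designTerm A (Pi.single j 1) k = if k = j / 2 then A j else 0 := by
  simp only [designTerm, Pi.single_apply]
  split_ifs <;> subst_vars <;> first | omega | simp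

lemma sum_designTerm_single_add_single {β : Type*} [AddCommMonoid β] (f : Matrix l n ℂ → β)
    (hf : f 0 = 0) {K i j : ℕ} (hi : i < 2 * K) (hj : j < 2 * K) (hij : i / 2 ≠ j / 2) :
    ∑ k ∈ range K, f (designTerm A (Pi.single i 1 + Pi.single j 1) k) = f (A i) + f (A j) := by
  rw [sum_eq_add_of_mem (i / 2) (j / 2) (mem_range.2 (by omega)) (mem_range.2 (by omega)) hij
    fun k _ hk => by simp [designTerm_add, designTerm_single, hk.1, hk.2, hf]]
  simp [designTerm_add, designTerm_single, hij, hij.symm]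

lemma designTerm_anticomm_eq_zero [Fintype l] (x : ℕ → ℝ) {a b : ℕ}
    (h : ∀ i j, i / 2 = a → j / 2 = b → (A i)ᴴ * A j + (A j)ᴴ * A i = 0) :
    (designTerm A x a)ᴴ * designTerm A x b + (designTerm A x b)ᴴ * designTerm A x a = 0 := by
  have h1 := eq_neg_of_add_eq_zero_right (h (2*a) (2*b) (by omega) (by omega))
  have h2 := eq_neg_of_add_eq_zero_right (h (2*a) (2*b+1) (by omega) (by omega))
  have h3 := eq_neg_of_add_eq_zero_right (h (2*a+1) (2*b) (by omega) (by omega))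
  have h4 := eq_neg_of_add_eq_zero_right (h (2*a+1) (2*b+1) (by omega) (by omega))
  simp only [designTerm, conjTranspose_add, conjTranspose_smul, Complex.star_def,
    Complex.conj_ofReal, Matrix.add_mul, Matrix.mul_add, Matrix.smul_mul, Matrix.mul_smul,
    h1, h2, h3, h4]
  module

end designTerm

theorem single_symbol_decodable_characterization_general
    (K L N M : ℕ) (hM : 0 < M)
    (A : ℕ → Matrix (Fin L) (Fin N) ℂ) :
    (∀ (V : Matrix (Fin L) (Fin M) ℂ) (H : Matrix (Fin N) (Fin M) ℂ) (x : ℕ → ℝ),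
      frobSq (V - (∑ k ∈ Finset.range K,
          ((x (2*k) : ℂ) • A (2*k) + (x (2*k+1) : ℂ) • A (2*k+1))) * H)
        = (∑ k ∈ Finset.range K,
            frobSq (V - ((x (2*k) : ℂ) • A (2*k) + (x (2*k+1) : ℂ) • A (2*k+1)) * H))
          - ((K : ℝ) - 1) * frobSq V)
    ↔ (∀ k l, k < 2*K → l < 2*K → k / 2 ≠ l / 2 →
        (A k)ᴴ * A l + (A l)ᴴ * A k = 0) := by
  have : Nonempty (Fin M) := ⟨⟨0, hM⟩⟩
  have hfold : ∀ x k, (x (2*k) : ℂ) • A (2*k) + (x (2*k+1) : ℂ) • A (2*k+1) = designTerm A x k :=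
    fun _ _ => rfl
  have hsplit := fun V (H : Matrix (Fin N) (Fin M) ℂ) x =>
    frobSq_sub_sum_eq_iff (range K) V fun k => designTerm A x k * H
  simp only [card_range] at hsplit
  simp only [hfold, Matrix.sum_mul, hsplit, forall_const]
  constructor
  · intro hpyth k l hk hl hkl
    rw [← forall_reInner_mul_mul_eq_zero_iff (o := Fin M)]
    intro H
    have hpair := hpyth H (Pi.single k 1 + Pi.single l 1)
    rw [sum_designTerm_single_add_single A (· * H) (Matrix.zero_mul H) hk hl hkl,
      sum_designTerm_single_add_single A (frobSq <| · * H) (by simp [frobSq]) hk hl hkl,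
      frobSq_add] at hpair
    linarith
  · intro hanti H x
    refine frobSq_sum_of_pairwise _ _ fun m hm n hn hmn => ?_
    simp only [coe_range, Set.mem_Iio] at hm hn
    have hanti_mn := designTerm_anticomm_eq_zero A x (a := m) (b := n) fun i j hi hj =>
      hanti i j (by omega) (by omega) (by omega)
    exact (forall_reInner_mul_mul_eq_zero_iff _ _).mpr hanti_mn H

/-- Single-symbol decodability characterization for general linear designs:
the ML metric decomposes into single-variable terms iff all weight matrices
`A k`, `A l` with `k / 2 ≠ l / 2` (i.e. not attached to the same complex
variable) satisfy `Aᴴₖ Aₗ + Aᴴₗ Aₖ = 0`. -/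
theorem single_symbol_decodable_characterization
    (K L N M : ℕ) (hK : 0 < K) (hL : 0 < L) (hN : 0 < N) (hM : 0 < M)
    (A : ℕ → Matrix (Fin L) (Fin N) ℂ) :
    (∀ (V : Matrix (Fin L) (Fin M) ℂ) (H : Matrix (Fin N) (Fin M) ℂ) (x : ℕ → ℝ),
      frobSq (V - (∑ k ∈ Finset.range K,
          ((x (2*k) : ℂ) • A (2*k) + (x (2*k+1) : ℂ) • A (2*k+1))) * H)
        = (∑ k ∈ Finset.range K,
            frobSq (V - ((x (2*k) : ℂ) • A (2*k) + (x (2*k+1) : ℂ) • A (2*k+1)) * H))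
          - ((K : ℝ) - 1) * frobSq V)
    ↔ (∀ k l, k < 2*K → l < 2*K → k / 2 ≠ l / 2 →
        (A k)ᴴ * A l + (A l)ᴴ * A k = 0) :=
  single_symbol_decodable_characterization_general K L N M hM A
end

section
/- Let N ≥ 2 and suppose A_0, …, A_{2N−1} are complex N×N matrices satisfying: Aᴴ_k·A_l + Aᴴ_l·A_k = 0 for all 0 ≤ k ≠ l ≤ 2N−1; Aᴴ_{2k}·A_{2k} + Aᴴ_{2k+1}·A_{2k+1} is invertible for every 0 ≤ k ≤ N−1; and Aᴴ_k·A_k is not invertible for at least one k. Then N = 2, N = 4 or N = 8. -/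
/-!
Pair the weight matrices as `B k = A (2k) + A (2k+1)`. The hypotheses make each `B k` invertible
with `(B k)ᴴ B l + (B l)ᴴ B k = 0` for `k ≠ l`, so the `N - 1` matrices `B k (B 0)⁻¹`, `k ≥ 1`, are
skew-Hermitian, invertible and pairwise anticommuting.

Any `m` invertible, pairwise anticommuting operators on a finite-dimensional complex space `V`
force `2 ^ (m / 2) ∣ dim V`. Indeed the product `J` of two of them commutes with the other
`m - 2` and anticommutes with the two factors, which therefore map the generalized
`μ`-eigenspace of `J` to the `(-μ)`-one. Choosing one of `μ, -μ` for every eigenvalue (a half-plane)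
splits `V` into two halves of equal dimension, and the other `m - 2` operators act on each half.

Finally `2 ^ ((N - 1) / 2) ∣ N` with `N ≥ 2` leaves only `N = 2, 4, 8`.
-/

open Matrix Module Pointwise

section Anticommute

variable {R : Type*} [Ring R] {x y z : R}

theorem commute_mul_of_anticomm (hx : x * z = -(z * x)) (hy : y * z = -(z * y)) :
    Commute (x * y) z := by
  change x * y * z = z * (x * y)
  rw [mul_assoc, hy, mul_neg, ← mul_assoc, hx, neg_mul, neg_neg, mul_assoc]

theorem mul_mul_self_of_anticomm (h : x * y = -(y * x)) : x * y * x = -(x * (x * y)) := by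
  rw [mul_assoc, h, mul_neg, neg_neg]

end Anticommute

namespace Module.End

variable {K V : Type*}

theorem mapsTo_maxGenEigenspace_neg_of_anticomm [CommRing K] [AddCommGroup V] [Module K V]
    {J g : End K V} (h : J * g = -(g * J)) (μ : K) :
    Set.MapsTo g (J.maxGenEigenspace μ) (J.maxGenEigenspace (-μ)) := by
  intro x hx
  obtain ⟨k, hk⟩ := (mem_maxGenEigenspace _ _ _).mp hx
  have hsemi : SemiconjBy g (-(J - μ • 1)) (J - (-μ) • 1) := by
    rw [SemiconjBy, mul_neg, mul_sub, sub_mul, h, mul_smul_comm, smul_mul_assoc, mul_one, one_mul]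
    module
  refine (mem_maxGenEigenspace _ _ _).mpr ⟨k, ?_⟩
  rw [← mul_apply, ← (hsemi.pow_right k).eq, mul_apply, neg_pow, mul_apply, hk, map_zero, map_zero]

theorem biSup_maxGenEigenspace_le_comap_of_comm [CommRing K] [AddCommGroup V] [Module K V]
    {J g : End K V} (h : Commute J g) (S : Set K) :
    ⨆ μ ∈ S, J.maxGenEigenspace μ ≤ (⨆ μ ∈ S, J.maxGenEigenspace μ).comap g :=
  iSup₂_le fun μ hμ _ hx ↦
    le_biSup (fun μ ↦ J.maxGenEigenspace μ) hμ (mapsTo_maxGenEigenspace_of_comm h μ hx)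

theorem biSup_maxGenEigenspace_le_comap_of_anticomm [CommRing K] [AddCommGroup V] [Module K V]
    {J g : End K V} (h : J * g = -(g * J)) (S : Set K) :
    ⨆ μ ∈ S, J.maxGenEigenspace μ ≤ (⨆ μ ∈ -S, J.maxGenEigenspace μ).comap g :=
  iSup₂_le fun μ hμ _ hx ↦ le_biSup (fun μ ↦ J.maxGenEigenspace μ) (Set.neg_mem_neg.mpr hμ)
    (mapsTo_maxGenEigenspace_neg_of_anticomm h μ hx)

theorem maxGenEigenspace_zero_eq_bot [CommRing K] [AddCommGroup V] [Module K V]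
    {J : End K V} (hJ : Function.Injective J) : J.maxGenEigenspace 0 = ⊥ := by
  refine (Submodule.eq_bot_iff _).mpr fun x hx ↦ ?_
  obtain ⟨k, hk⟩ := (mem_maxGenEigenspace _ _ _).mp hx
  rw [zero_smul, sub_zero, ← map_zero (J ^ k)] at hk
  exact (hJ.iterate k) (by simpa only [coe_pow] using hk)

theorem isCompl_biSup_maxGenEigenspace [Field K] [IsAlgClosed K] [AddCommGroup V] [Module K V]
    [FiniteDimensional K V] {J : End K V} (hJ : Function.Injective J) {S : Set K}
    (hdisj : Disjoint S (-S)) (hcover : ∀ μ ≠ 0, μ ∈ S ∨ μ ∈ -S) :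
    IsCompl (⨆ μ ∈ S, J.maxGenEigenspace μ) (⨆ μ ∈ -S, J.maxGenEigenspace μ) := by
  refine ⟨J.independent_maxGenEigenspace.disjoint_biSup_biSup hdisj, codisjoint_iff.mpr ?_⟩
  rw [eq_top_iff, ← J.iSup_maxGenEigenspace_eq_top]
  refine iSup_le fun μ ↦ ?_
  rcases eq_or_ne μ 0 with rfl | hμ
  · simp [maxGenEigenspace_zero_eq_bot hJ]
  rcases hcover μ hμ with hS | hS
  · exact le_sup_of_le_left (le_biSup (fun μ ↦ J.maxGenEigenspace μ) hS)
  · exact le_sup_of_le_right (le_biSup (fun μ ↦ J.maxGenEigenspace μ) hS)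

end Module.End

theorem Submodule.finrank_eq_two_mul_of_isCompl_of_swap {K V : Type*} [Field K] [AddCommGroup V]
    [Module K V] [FiniteDimensional K V] {W W' : Submodule K V} (hc : IsCompl W W')
    {g : Module.End K V} (hg : Function.Injective g) (h : W ≤ W'.comap g) (h' : W' ≤ W.comap g) :
    finrank K V = 2 * finrank K W := by
  have hle {U U' : Submodule K V} (hU : U ≤ U'.comap g) : finrank K U ≤ finrank K U' :=
    (equivMapOfInjective g hg U).finrank_eq.trans_le (finrank_mono (map_le_iff_le_comap.mpr hU))
  rw [← Submodule.finrank_add_eq_of_isCompl hc, (hle h).antisymm (hle h')]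
  ring

namespace Complex

def lexPos : Set ℂ := {μ | 0 < μ.re ∨ μ.re = 0 ∧ 0 < μ.im}

theorem disjoint_lexPos_neg : Disjoint lexPos (-lexPos) := by
  refine Set.disjoint_left.mpr fun μ h h' ↦ ?_
  simp only [lexPos, Set.mem_neg, Set.mem_ofPred_eq, neg_re, neg_im] at h h'
  rcases h with h | ⟨h, h₁⟩ <;> rcases h' with h' | ⟨h', h₁'⟩ <;> linarith

theorem mem_lexPos_or_mem_neg {μ : ℂ} (hμ : μ ≠ 0) : μ ∈ lexPos ∨ μ ∈ -lexPos := by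
  simp only [lexPos, Set.mem_neg, Set.mem_ofPred_eq, neg_re, neg_im, neg_pos, neg_eq_zero]
  rcases lt_trichotomy μ.re 0 with h | h | h
  · exact .inr (.inl h)
  · rcases lt_trichotomy μ.im 0 with h' | h' | h'
    · exact .inr (.inr ⟨h, h'⟩)
    · exact absurd (Complex.ext h h') hμ
    · exact .inl (.inr ⟨h, h'⟩)
  · exact .inl (.inl h)

end Complex

theorem Module.End.isUnit_restrict {K V : Type*} [Field K] [AddCommGroup V] [Module K V]
    [FiniteDimensional K V] {f : End K V} (hf : IsUnit f) {W : Submodule K V}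
    (h : W ≤ W.comap f) : IsUnit (f.restrict h) := by
  have hinj : Function.Injective (f.restrict h) := (LinearMap.injective_restrict_iff h).mpr <| by
    rw [LinearMap.ker_eq_bot.mpr ((End.isUnit_iff f).mp hf).injective]
    exact disjoint_bot_right
  exact (End.isUnit_iff _).mpr ⟨hinj, LinearMap.injective_iff_surjective.mp hinj⟩

theorem LinearMap.restrict_mul_anticomm {R M : Type*} [CommRing R] [AddCommGroup M] [Module R M]
    {f g : Module.End R M} (hfg : f * g = -(g * f)) {W : Submodule R M}
    (hf : W ≤ W.comap f) (hg : W ≤ W.comap g) :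
    f.restrict hf * g.restrict hg = -(g.restrict hg * f.restrict hf) := by
  ext x
  simpa using LinearMap.congr_fun hfg x

theorem Module.End.two_pow_dvd_finrank_of_anticomm {V : Type*} [AddCommGroup V] [Module ℂ V]
    [FiniteDimensional ℂ V] (m : ℕ) (T : Fin m → Module.End ℂ V) (hT : ∀ i, IsUnit (T i))
    (hanti : Pairwise fun i j ↦ T i * T j = -(T j * T i)) :
    2 ^ (m / 2) ∣ finrank ℂ V := by
  induction m using Nat.twoStepInduction generalizing V with
  | zero => simp
  | one => simp
  | more m ih _ =>
    set a := Fin.last (m + 1)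
    set b := (Fin.last m).castSucc
    set J := T a * T b
    have hJa : J * T a = -(T a * J) :=
      mul_mul_self_of_anticomm (hanti (by simp [a, b, Fin.ext_iff]))
    have hJ : Function.Injective J := ((End.isUnit_iff J).mp ((hT a).mul (hT b))).injective
    set W := ⨆ μ ∈ Complex.lexPos, J.maxGenEigenspace μ
    have hdim : finrank ℂ V = 2 * finrank ℂ W :=
      Submodule.finrank_eq_two_mul_of_isCompl_of_swap
        (End.isCompl_biSup_maxGenEigenspace hJ Complex.disjoint_lexPos_neg
          fun _ ↦ Complex.mem_lexPos_or_mem_neg)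
        ((End.isUnit_iff _).mp (hT a)).injective
        (End.biSup_maxGenEigenspace_le_comap_of_anticomm hJa _)
        (by simpa only [neg_neg] using
          End.biSup_maxGenEigenspace_le_comap_of_anticomm hJa (-Complex.lexPos))
    set c : Fin m → Fin (m + 2) := fun i ↦ i.castSucc.castSucc
    have hW (i : Fin m) : W ≤ W.comap (T (c i)) :=
      End.biSup_maxGenEigenspace_le_comap_of_comm (commute_mul_of_anticomm
        (hanti (by simp [a, c, Fin.ext_iff]; omega)) (hanti (by simp [b, c, Fin.ext_iff]; omega))) _
    obtain ⟨d, hd⟩ := ih (fun i ↦ (T (c i)).restrict (hW i))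
      (fun i ↦ End.isUnit_restrict (hT _) _)
      (fun i j hij ↦ LinearMap.restrict_mul_anticomm (hanti (by simpa [c] using hij)) _ _)
    rw [hdim, hd, show (m + 2) / 2 = m / 2 + 1 by omega, pow_succ]
    exact ⟨d, by ring⟩

namespace Matrix

variable {n R : Type*} [Fintype n]

theorem conjTranspose_add_mul_self_of_anticomm [Ring R] [StarRing R] {X Y : Matrix n n R}
    (h : Xᴴ * Y + Yᴴ * X = 0) : (X + Y)ᴴ * (X + Y) = Xᴴ * X + Yᴴ * Y := by
  rw [conjTranspose_add, add_mul, mul_add, mul_add, ← sub_eq_zero, ← h]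
  abel

theorem conjTranspose_add_mul_add_anticomm [Ring R] [StarRing R] {X X' Y Y' : Matrix n n R}
    (h₁ : Xᴴ * Y + Yᴴ * X = 0) (h₂ : Xᴴ * Y' + Y'ᴴ * X = 0) (h₃ : X'ᴴ * Y + Yᴴ * X' = 0)
    (h₄ : X'ᴴ * Y' + Y'ᴴ * X' = 0) :
    (X + X')ᴴ * (Y + Y') + (Y + Y')ᴴ * (X + X') = 0 := by
  calc _ = (Xᴴ * Y + Yᴴ * X) + (Xᴴ * Y' + Y'ᴴ * X) + (X'ᴴ * Y + Yᴴ * X')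
        + (X'ᴴ * Y' + Y'ᴴ * X') := by
        simp only [conjTranspose_add, Matrix.add_mul, Matrix.mul_add]
        abel
    _ = 0 := by rw [h₁, h₂, h₃, h₄, add_zero, add_zero, add_zero]

theorem conjTranspose_mul_add_conjTranspose_mul_mul_right [Ring R] [StarRing R]
    (X Y M : Matrix n n R) :
    (X * M)ᴴ * (Y * M) + (Y * M)ᴴ * (X * M) = Mᴴ * (Xᴴ * Y + Yᴴ * X) * M := by
  simp only [conjTranspose_mul, Matrix.mul_assoc, Matrix.mul_add, Matrix.add_mul]

variable [DecidableEq n]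

theorem mul_nonsing_inv_anticomm [CommRing R] [StarRing R] {B X Y : Matrix n n R}
    (hB : IsUnit B) (hX : Bᴴ * X + Xᴴ * B = 0) (hY : Bᴴ * Y + Yᴴ * B = 0)
    (hXY : Xᴴ * Y + Yᴴ * X = 0) : X * B⁻¹ * (Y * B⁻¹) = -(Y * B⁻¹ * (X * B⁻¹)) := by
  have hskew {Z : Matrix n n R} (hZ : Bᴴ * Z + Zᴴ * B = 0) : (Z * B⁻¹)ᴴ = -(Z * B⁻¹) := by
    have := conjTranspose_mul_add_conjTranspose_mul_mul_right Z B B⁻¹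
    rw [add_comm (Zᴴ * B), hZ, mul_nonsing_inv _ ((isUnit_iff_isUnit_det B).mp hB),
      Matrix.mul_zero, Matrix.zero_mul, conjTranspose_one, Matrix.mul_one, Matrix.one_mul] at this
    exact eq_neg_of_add_eq_zero_left this
  have := conjTranspose_mul_add_conjTranspose_mul_mul_right X Y B⁻¹
  rw [hXY, Matrix.mul_zero, Matrix.zero_mul, hskew hX, hskew hY, neg_mul, neg_mul, ← neg_add]
    at this
  exact eq_neg_of_add_eq_zero_left (neg_eq_zero.mp this)

theorem two_pow_dvd_card_of_anticomm {m : ℕ} (C : Fin m → Matrix n n ℂ) (hC : ∀ i, IsUnit (C i))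
    (hanti : Pairwise fun i j ↦ C i * C j = -(C j * C i)) : 2 ^ (m / 2) ∣ Fintype.card n := by
  simpa using End.two_pow_dvd_finrank_of_anticomm m (fun i ↦ toLinAlgEquiv' (C i))
    (fun i ↦ (hC i).map _) (fun i j hij ↦ by simpa using congr(toLinAlgEquiv' $(hanti hij)))

theorem two_pow_dvd_card_of_conjTranspose_anticomm (m : ℕ) (B : ℕ → Matrix n n ℂ)
    (hB : ∀ k ≤ m, IsUnit (B k))
    (horth : ∀ k ≤ m, ∀ l ≤ m, k ≠ l → (B k)ᴴ * B l + (B l)ᴴ * B k = 0) :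
    2 ^ (m / 2) ∣ Fintype.card n :=
  two_pow_dvd_card_of_anticomm (fun i : Fin m ↦ B (i + 1) * (B 0)⁻¹)
    (fun i ↦ (hB _ i.isLt).mul (isUnit_nonsing_inv_iff.mpr (hB 0 m.zero_le)))
    fun i j hij ↦ mul_nonsing_inv_anticomm (hB 0 m.zero_le)
      (horth _ m.zero_le _ i.isLt (by omega)) (horth _ m.zero_le _ j.isLt (by omega))
      (horth _ i.isLt _ j.isLt (by simpa [Fin.ext_iff] using hij))

end Matrix

theorem Nat.eq_two_or_four_or_eight_of_two_pow_dvd {N : ℕ} (hN : 2 ≤ N)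
    (h : 2 ^ ((N - 1) / 2) ∣ N) : N = 2 ∨ N = 4 ∨ N = 8 := by
  have h8 : N ≤ 8 := by
    by_contra! h9
    have hle := Nat.le_of_dvd (by omega) h
    rw [show (N - 1) / 2 = (N - 1) / 2 - 4 + 4 by omega, pow_add] at hle
    have := Nat.lt_two_pow_self (n := (N - 1) / 2 - 4)
    omega
  interval_cases N <;> simp_all

theorem rate_one_square_RFSDD_size_general
    (N : ℕ) (hN : 2 ≤ N) (A : ℕ → Matrix (Fin N) (Fin N) ℂ)
    (hanti : ∀ k l, k < 2*N → l < 2*N → k ≠ l → (A k)ᴴ * A l + (A l)ᴴ * A k = 0)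
    (hsum : ∀ k < N, IsUnit ((A (2*k))ᴴ * A (2*k) + (A (2*k+1))ᴴ * A (2*k+1))) :
    N = 2 ∨ N = 4 ∨ N = 8 := by
  set B : ℕ → Matrix (Fin N) (Fin N) ℂ := fun k ↦ A (2 * k) + A (2 * k + 1)
  have hB : ∀ k ≤ N - 1, IsUnit (B k) := fun k hk ↦ by
    have hgram := hsum k (by omega)
    rw [← conjTranspose_add_mul_self_of_anticomm (hanti _ _ (by omega) (by omega) (by omega))]
      at hgram
    exact isUnit_of_mul_isUnit_right hgram
  have horth : ∀ k ≤ N - 1, ∀ l ≤ N - 1, k ≠ l → (B k)ᴴ * B l + (B l)ᴴ * B k = 0 :=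
    fun k hk l hl hkl ↦ conjTranspose_add_mul_add_anticomm
      (hanti _ _ (by omega) (by omega) (by omega)) (hanti _ _ (by omega) (by omega) (by omega))
      (hanti _ _ (by omega) (by omega) (by omega)) (hanti _ _ (by omega) (by omega) (by omega))
  apply Nat.eq_two_or_four_or_eight_of_two_pow_dvd hN
  simpa using two_pow_dvd_card_of_conjTranspose_anticomm (N - 1) B hB horth

/-- If a rate-one square restricted full-rank single-symbol decodable design
(RFSDD) of size `N` exists (i.e. `2N` weight matrices with pairwise
anticommuting Grams, invertible Gram-sums per variable, and at least one
singular Gram matrix), then `N = 2`, `N = 4` or `N = 8`. -/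
theorem rate_one_square_RFSDD_size
    (N : ℕ) (hN : 2 ≤ N) (A : ℕ → Matrix (Fin N) (Fin N) ℂ)
    (hanti : ∀ k l, k < 2*N → l < 2*N → k ≠ l → (A k)ᴴ * A l + (A l)ᴴ * A k = 0)
    (hsum : ∀ k < N, IsUnit ((A (2*k))ᴴ * A (2*k) + (A (2*k+1))ᴴ * A (2*k+1)))
    (hsing : ∃ k < 2*N, ¬ IsUnit ((A k)ᴴ * A k)) :
    N = 2 ∨ N = 4 ∨ N = 8 :=
  rate_one_square_RFSDD_size_general N hN A hanti hsum
end

section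
/- Let Q ≥ 2 be an integer and let d > 0. Let A = { ((2k − 1 − Q) + i·(2l − 1 − Q))·d : k, l ∈ {1, …, Q} } ⊆ ℂ be the Q²-point square QAM constellation, and for θ ∈ ℝ let A_θ = { e^{iθ}·z : z ∈ A } be its rotation by θ. Then: (a) for every θ ∈ ℝ, CPD(A_θ) ≤ 4d²/√5; and (b) for θ₀ = arctan(2)/2 one has CPD(A_{θ₀}) = 4d²/√5. Hence the co-ordinate product distance of the rotated square QAM constellation is maximized at the rotation angle arctan(2)/2 ≈ 31.7175°, where it equals 4d²/√5. -/
open Complex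

/-- The co-ordinate product distance (CPD) of a set of complex signal points:
the infimum over pairs of distinct points of the product of the absolute
differences of the real and imaginary coordinates. -/
noncomputable def CPD (A : Set ℂ) : ℝ :=
  sInf {r : ℝ | ∃ u ∈ A, ∃ v ∈ A, u ≠ v ∧ r = |(u - v).re| * |(u - v).im|}

/-!
Differences of points of the square QAM constellation are the vectors `2d(a + bi)` with
`(a, b) ∈ ℤ² ∖ 0`, and rotating such a vector by `θ` gives the coordinate product
`2d² |(a² - b²) sin 2θ + 2ab cos 2θ|`. The differences `(1, 0)` and `(1, 1)` give
`2d² |sin 2θ|` and `4d² |cos 2θ|`, and `sin² + cos² = 1` forces one of them below `4d²/√5`.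
At `tan 2θ = 2` every difference gives `4d² |a² + ab - b²| / √5`, and `a² + ab - b²` is a nonzero
integer since `5` is not a rational square.
-/

/-- `4 (a² + ab - b²) = (2a + b)² - 5b²`, so a nontrivial zero would make `5` a rational square. -/
lemma Int.eq_zero_of_sq_add_mul_sub_sq_eq_zero {a b : ℤ} (h : a ^ 2 + a * b - b ^ 2 = 0) :
    a = 0 ∧ b = 0 := by
  obtain rfl | hb := eq_or_ne b 0
  · simpa using h
  refine absurd ?_ (by norm_num : Nat.Prime 5).not_isSquare
  rw [← Rat.isSquare_natCast_iff]
  refine ⟨(2 * a + b) / b, ?_⟩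
  have hb' : (b : ℚ) ≠ 0 := Int.cast_ne_zero.2 hb
  have h' : ((a : ℚ) ^ 2 + a * b - b ^ 2) = 0 := by exact_mod_cast h
  field_simp
  linear_combination -4 * h'

lemma CPD_le {A : Set ℂ} {u v : ℂ} (hu : u ∈ A) (hv : v ∈ A) (huv : u ≠ v) :
    CPD A ≤ |(u - v).re| * |(u - v).im| :=
  csInf_le ⟨0, by rintro r ⟨u, -, v, -, -, rfl⟩; positivity⟩ ⟨u, hu, v, hv, huv, rfl⟩

lemma le_CPD {A : Set ℂ} {r : ℝ} (hA : A.Nontrivial)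
    (h : ∀ u ∈ A, ∀ v ∈ A, u ≠ v → r ≤ |(u - v).re| * |(u - v).im|) : r ≤ CPD A := by
  obtain ⟨u, hu, v, hv, huv⟩ := hA
  refine le_csInf ⟨_, u, hu, v, hv, huv, rfl⟩ ?_
  rintro _ ⟨u, hu, v, hv, huv, rfl⟩
  exact h u hu v hv huv

lemma abs_re_mul_abs_im_exp_mul (θ : ℝ) (w : ℂ) :
    |(exp (θ * I) * w).re| * |(exp (θ * I) * w).im|
      = |(w.re ^ 2 - w.im ^ 2) * Real.sin (2 * θ) + 2 * w.re * w.im * Real.cos (2 * θ)| / 2 := by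
  rw [← abs_mul, mul_re, mul_im, exp_ofReal_mul_I_re, exp_ofReal_mul_I_im, Real.sin_two_mul,
    Real.cos_two_mul', ← abs_two, ← abs_div]
  ring_nf

lemma abs_sin_le_or_abs_cos_le (φ : ℝ) :
    |Real.sin φ| ≤ 2 / √5 ∨ |Real.cos φ| ≤ 1 / √5 := by
  by_contra! h
  have h5 : √5 ^ 2 = 5 := Real.sq_sqrt (by norm_num)
  have hs := pow_lt_pow_left₀ h.1 (by positivity) two_ne_zero
  have hc := pow_lt_pow_left₀ h.2 (by positivity) two_ne_zero
  rw [div_pow, h5, sq_abs] at hs hc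
  nlinarith [Real.sin_sq_add_cos_sq φ]

def squareQAM (Q : ℕ) (d : ℝ) : Set ℂ :=
  {z : ℂ | ∃ k l : ℤ, 1 ≤ k ∧ k ≤ (Q : ℤ) ∧ 1 ≤ l ∧ l ≤ (Q : ℤ) ∧
    z = (((2*k - 1 - (Q : ℤ) : ℤ) : ℂ) + Complex.I * ((2*l - 1 - (Q : ℤ) : ℤ) : ℂ)) * (d : ℂ)}

section squareQAM

variable {Q : ℕ} {d : ℝ}

lemma exists_sub_eq_of_mem_squareQAM {u v : ℂ} (hu : u ∈ squareQAM Q d)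
    (hv : v ∈ squareQAM Q d) : ∃ a b : ℤ, u - v = 2 * d * (a + b * I) := by
  obtain ⟨k, l, -, -, -, -, rfl⟩ := hu
  obtain ⟨k', l', -, -, -, -, rfl⟩ := hv
  exact ⟨k - k', l - l', by push_cast; ring⟩

lemma exists_mem_squareQAM_sub_eq {a b : ℤ} (ha : 0 ≤ a) (ha' : a < Q) (hb : 0 ≤ b)
    (hb' : b < Q) : ∃ u ∈ squareQAM Q d, ∃ v ∈ squareQAM Q d, u - v = 2 * d * (a + b * I) :=
  ⟨_, ⟨1 + a, 1 + b, by omega, by omega, by omega, by omega, rfl⟩,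
    _, ⟨1, 1, le_rfl, by omega, le_rfl, by omega, rfl⟩, by push_cast; ring⟩

lemma abs_re_mul_abs_im_exp_mul_sub_of_sub_eq {θ : ℝ} {u v : ℂ} {a b : ℤ}
    (h : u - v = 2 * d * (a + b * I)) :
    |(exp (θ * I) * u - exp (θ * I) * v).re| * |(exp (θ * I) * u - exp (θ * I) * v).im|
      = 2 * d ^ 2 * |(a ^ 2 - b ^ 2) * Real.sin (2 * θ) + 2 * a * b * Real.cos (2 * θ)| := by
  have hre : (u - v).re = 2 * d * a := by simp [h]
  have him : (u - v).im = 2 * d * b := by simp [h]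
  rw [← mul_sub, abs_re_mul_abs_im_exp_mul, hre, him]
  rw [show ((2 * d * a) ^ 2 - (2 * d * b) ^ 2) * Real.sin (2 * θ)
      + 2 * (2 * d * a) * (2 * d * b) * Real.cos (2 * θ)
      = (2 * d) ^ 2 * ((a ^ 2 - b ^ 2) * Real.sin (2 * θ) + 2 * a * b * Real.cos (2 * θ)) by ring,
    abs_mul, abs_sq]
  ring

lemma exp_mul_ne_exp_mul_of_sub_eq (hd : d ≠ 0) {θ : ℝ} {u v : ℂ} {a b : ℤ}
    (hab : ¬(a = 0 ∧ b = 0)) (h : u - v = 2 * d * (a + b * I)) :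
    exp (θ * I) * u ≠ exp (θ * I) * v := by
  rw [ne_eq, mul_right_inj' (exp_ne_zero _), ← sub_eq_zero, h]
  simpa [hd, Complex.ext_iff] using hab

lemma CPD_rotate_squareQAM_le (hd : d ≠ 0) {a b : ℤ} (ha : 0 ≤ a) (ha' : a < Q) (hb : 0 ≤ b)
    (hb' : b < Q) (hab : ¬(a = 0 ∧ b = 0)) (θ : ℝ) :
    CPD ((fun z => exp (θ * I) * z) '' squareQAM Q d)
      ≤ 2 * d ^ 2 * |(a ^ 2 - b ^ 2) * Real.sin (2 * θ) + 2 * a * b * Real.cos (2 * θ)| := by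
  obtain ⟨u, hu, v, hv, huv⟩ := exists_mem_squareQAM_sub_eq (d := d) ha ha' hb hb'
  exact (CPD_le (Set.mem_image_of_mem _ hu) (Set.mem_image_of_mem _ hv)
    (exp_mul_ne_exp_mul_of_sub_eq hd hab huv)).trans_eq
    (abs_re_mul_abs_im_exp_mul_sub_of_sub_eq huv)

lemma le_CPD_rotate_squareQAM (hQ : 2 ≤ Q) (hd : d ≠ 0) {θ r : ℝ}
    (h : ∀ a b : ℤ, ¬(a = 0 ∧ b = 0) →
      r ≤ 2 * d ^ 2 * |(a ^ 2 - b ^ 2) * Real.sin (2 * θ) + 2 * a * b * Real.cos (2 * θ)|) :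
    r ≤ CPD ((fun z => exp (θ * I) * z) '' squareQAM Q d) := by
  refine le_CPD ?_ ?_
  · obtain ⟨u, hu, v, hv, huv⟩ := exists_mem_squareQAM_sub_eq (Q := Q) (d := d) (a := 1) (b := 0)
      zero_le_one (by omega) le_rfl (by omega)
    exact ⟨_, Set.mem_image_of_mem _ hu, _, Set.mem_image_of_mem _ hv,
      exp_mul_ne_exp_mul_of_sub_eq hd (by simp) huv⟩
  · rintro _ ⟨u, hu, rfl⟩ _ ⟨v, hv, rfl⟩ huv
    obtain ⟨a, b, hab⟩ := exists_sub_eq_of_mem_squareQAM hu hv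
    rw [abs_re_mul_abs_im_exp_mul_sub_of_sub_eq hab]
    refine h a b ?_
    rintro ⟨rfl, rfl⟩
    apply huv
    simpa [sub_eq_zero] using hab

end squareQAM

/-- The CPD of the rotated square `Q²`-point QAM constellation is maximized at
the rotation angle `arctan 2 / 2`, where it equals `4 d² / √5`. -/
theorem square_QAM_optimal_rotation
    (Q : ℕ) (hQ : 2 ≤ Q) (d : ℝ) (hd : 0 < d) (A : Set ℂ)
    (hA : A = {z : ℂ | ∃ k l : ℤ, 1 ≤ k ∧ k ≤ (Q : ℤ) ∧ 1 ≤ l ∧ l ≤ (Q : ℤ) ∧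
      z = (((2*k - 1 - (Q : ℤ) : ℤ) : ℂ) + Complex.I * ((2*l - 1 - (Q : ℤ) : ℤ) : ℂ)) * (d : ℂ)}) :
    (∀ θ : ℝ,
      CPD ((fun z => Complex.exp ((θ : ℂ) * Complex.I) * z) '' A) ≤ 4 * d^2 / Real.sqrt 5) ∧
    CPD ((fun z => Complex.exp (((Real.arctan 2 / 2 : ℝ) : ℂ) * Complex.I) * z) '' A)
      = 4 * d^2 / Real.sqrt 5 := by
  change A = squareQAM Q d at hA
  subst hA
  have upper (θ : ℝ) : CPD ((fun z => exp (θ * I) * z) '' squareQAM Q d) ≤ 4 * d ^ 2 / √5 := by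
    rcases abs_sin_le_or_abs_cos_le (2 * θ) with h | h
    · calc _ ≤ 2 * d ^ 2 * |((1 : ℤ) ^ 2 - (0 : ℤ) ^ 2) * Real.sin (2 * θ)
            + 2 * (1 : ℤ) * (0 : ℤ) * Real.cos (2 * θ)| :=
          CPD_rotate_squareQAM_le hd.ne' zero_le_one (by omega) le_rfl (by omega) (by simp) θ
        _ = 2 * d ^ 2 * |Real.sin (2 * θ)| := by norm_num
        _ ≤ 2 * d ^ 2 * (2 / √5) := by gcongr
        _ = 4 * d ^ 2 / √5 := by ring
    · calc _ ≤ 2 * d ^ 2 * |((1 : ℤ) ^ 2 - (1 : ℤ) ^ 2) * Real.sin (2 * θ)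
            + 2 * (1 : ℤ) * (1 : ℤ) * Real.cos (2 * θ)| :=
          CPD_rotate_squareQAM_le hd.ne' zero_le_one (by omega) zero_le_one (by omega) (by simp) θ
        _ = 4 * d ^ 2 * |Real.cos (2 * θ)| := by norm_num [abs_mul]; ring
        _ ≤ 4 * d ^ 2 * (1 / √5) := by gcongr
        _ = 4 * d ^ 2 / √5 := by ring
  refine ⟨upper, (upper _).antisymm (le_CPD_rotate_squareQAM hQ hd.ne' fun a b hab => ?_)⟩
  have hn : (1 : ℝ) ≤ |((a ^ 2 + a * b - b ^ 2 : ℤ) : ℝ)| := by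
    exact_mod_cast Int.one_le_abs (mt Int.eq_zero_of_sq_add_mul_sub_sq_eq_zero hab)
  rw [show 2 * (Real.arctan 2 / 2) = Real.arctan 2 by ring, Real.sin_arctan, Real.cos_arctan,
    show √(1 + 2 ^ 2 : ℝ) = √5 by norm_num,
    show ((a : ℝ) ^ 2 - b ^ 2) * (2 / √5) + 2 * a * b * (1 / √5)
      = 2 / √5 * ((a ^ 2 + a * b - b ^ 2 : ℤ) : ℝ) by push_cast; ring,
    abs_mul, abs_of_pos (by positivity : (0 : ℝ) < 2 / √5)]
  calc 4 * d ^ 2 / √5 = 2 * d ^ 2 * (2 / √5) * 1 := by ring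
    _ ≤ 2 * d ^ 2 * (2 / √5) * |((a ^ 2 + a * b - b ^ 2 : ℤ) : ℝ)| := by gcongr
    _ = _ := by ring
end

section
/- Let d > 0 and let S be a finite subset of the square lattice { 2d·(k + i·l) : k, l ∈ ℤ } ⊆ ℂ with at least two elements, such that there exist p, q ∈ S with p − q ∈ {2d, −2d, 2d·i, −2d·i} (i.e., some pair of points of S differs by exactly one lattice step in exactly one coordinate). Then, with θ₀ = arctan(2)/2, the rotated constellation e^{iθ₀}·S = { e^{iθ₀}·z : z ∈ S } satisfies CPD(e^{iθ₀}·S) = 4d²/√5. -/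
open Complex

lemma NILC_aux_int (m n : ℤ) (h : m^2 + m*n - n^2 = 0) : m = 0 ∧ n = 0 := by
  have h5 : (2*m+n)^2 = 5*n^2 := by linear_combination 4*h
  by_cases hn : n = 0
  · subst hn
    exact ⟨by nlinarith, rfl⟩
  · exfalso
    have hirr : Irrational (Real.sqrt 5) := by
      have := (by norm_num : Nat.Prime 5).irrational_sqrt
      simpa using this
    have hnR : ((n:ℝ)) ≠ 0 := Int.cast_ne_zero.mpr hn
    have h5R : ((2*m+n : ℤ):ℝ)^2 = 5*(n:ℝ)^2 := by exact_mod_cast congrArg (fun x : ℤ => (x:ℝ)) h5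
    have hsq : Real.sqrt 5 = |((2*m+n : ℤ):ℝ)| / |(n:ℝ)| := by
      rw [show (5:ℝ) = (((2*m+n : ℤ):ℝ)/(n:ℝ))^2 by
        rw [div_pow]; field_simp; push_cast at h5R ⊢; linarith,
        Real.sqrt_sq_eq_abs, abs_div]
    exact hirr ⟨|(2*m+n : ℚ)| / |(n : ℚ)|, by push_cast [hsq]; ring⟩

/-- The key computation: the coordinate product of a rotated lattice vector. -/
lemma NILC_key (d : ℝ) (hd : 0 < d) (m n : ℤ) :
    |((Complex.exp (((Real.arctan 2 / 2 : ℝ) : ℂ) * Complex.I) *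
        (2 * (d:ℂ) * ((m:ℂ) + (n:ℂ) * Complex.I))).re)| *
    |((Complex.exp (((Real.arctan 2 / 2 : ℝ) : ℂ) * Complex.I) *
        (2 * (d:ℂ) * ((m:ℂ) + (n:ℂ) * Complex.I))).im)| =
    4 * d^2 * |((m^2 + m*n - n^2 : ℤ) : ℝ)| / Real.sqrt 5 := by
  set θ := Real.arctan 2 / 2 with hθ
  set z : ℂ := 2 * (d:ℂ) * ((m:ℂ) + (n:ℂ) * Complex.I) with hz
  have hre : (Complex.exp ((θ:ℂ)*I) * z).re = Real.cos θ * z.re - Real.sin θ * z.im := by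
    rw [Complex.exp_mul_I]
    simp [add_mul, Complex.mul_re, Complex.mul_im, Complex.cos_ofReal_re, Complex.sin_ofReal_re]
    ring
  have him : (Complex.exp ((θ:ℂ)*I) * z).im = Real.sin θ * z.re + Real.cos θ * z.im := by
    rw [Complex.exp_mul_I]
    simp [add_mul, Complex.mul_re, Complex.mul_im, Complex.cos_ofReal_re, Complex.sin_ofReal_re]
    ring
  have hzre : z.re = 2 * d * m := by simp [hz]
  have hzim : z.im = 2 * d * n := by simp [hz]
  have hs5 : (0:ℝ) < Real.sqrt 5 := Real.sqrt_pos.mpr (by norm_num)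
  have hcs : Real.cos θ * Real.sin θ = 1 / Real.sqrt 5 := by
    have h1 : Real.sin (2 * θ) = 2 / Real.sqrt 5 := by
      rw [hθ, show 2 * (Real.arctan 2 / 2) = Real.arctan 2 by ring, Real.sin_arctan]
      norm_num
    rw [Real.sin_two_mul] at h1
    linear_combination h1 / 2
  have hc2 : Real.cos θ ^ 2 - Real.sin θ ^ 2 = 1 / Real.sqrt 5 := by
    have h1 : Real.cos (2 * θ) = 1 / Real.sqrt 5 := by
      rw [hθ, show 2 * (Real.arctan 2 / 2) = Real.arctan 2 by ring, Real.cos_arctan]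
      norm_num
    rw [Real.cos_two_mul] at h1
    have := Real.sin_sq_add_cos_sq θ
    linarith
  rw [← abs_mul, hre, him, hzre, hzim]
  have hprod : (Real.cos θ * (2 * d * m) - Real.sin θ * (2 * d * n)) *
      (Real.sin θ * (2 * d * m) + Real.cos θ * (2 * d * n)) =
      4 * d^2 * ((m^2 + m*n - n^2 : ℤ) : ℝ) / Real.sqrt 5 := by
    have expand : (Real.cos θ * (2 * d * m) - Real.sin θ * (2 * d * n)) *
        (Real.sin θ * (2 * d * m) + Real.cos θ * (2 * d * n)) =
        4 * d^2 * ((Real.cos θ * Real.sin θ) * ((m:ℝ)^2 - (n:ℝ)^2)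
          + (Real.cos θ ^ 2 - Real.sin θ ^ 2) * ((m:ℝ) * n)) := by ring
    rw [expand, hcs, hc2]
    push_cast
    ring
  rw [hprod, abs_div, abs_of_pos hs5, abs_mul, abs_of_pos (by positivity : (0:ℝ) < 4 * d^2)]

/-- Any finite non-reducible integer lattice constellation (a finite subset of
the square lattice `2d(ℤ + iℤ)` containing two points differing by exactly one
lattice step in exactly one coordinate), rotated by `arctan 2 / 2`, has
CPD equal to `4 d² / √5`. -/
theorem NILC_CPD_at_optimal_rotation
    (d : ℝ) (hd : 0 < d) (S : Set ℂ) (hfin : S.Finite)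
    (hlat : ∀ z ∈ S, ∃ k l : ℤ, z = 2 * (d : ℂ) * ((k : ℂ) + (l : ℂ) * Complex.I))
    (hstep : ∃ p ∈ S, ∃ q ∈ S, p - q ∈
      ({2 * (d : ℂ), -(2 * (d : ℂ)), 2 * (d : ℂ) * Complex.I,
        -(2 * (d : ℂ) * Complex.I)} : Set ℂ)) :
    CPD ((fun z => Complex.exp (((Real.arctan 2 / 2 : ℝ) : ℂ) * Complex.I) * z) '' S)
      = 4 * d^2 / Real.sqrt 5 := by
  set e : ℂ := Complex.exp (((Real.arctan 2 / 2 : ℝ) : ℂ) * Complex.I) with he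
  have hene : e ≠ 0 := Complex.exp_ne_zero _
  set T := {r : ℝ | ∃ u ∈ (fun z => e * z) '' S, ∃ v ∈ (fun z => e * z) '' S,
      u ≠ v ∧ r = |(u - v).re| * |(u - v).im|} with hT
  have hs5 : (0:ℝ) < Real.sqrt 5 := Real.sqrt_pos.mpr (by norm_num)
  -- lower bound
  have hlb : ∀ r ∈ T, 4 * d^2 / Real.sqrt 5 ≤ r := by
    rintro r ⟨u, ⟨p, hp, rfl⟩, v, ⟨q, hq, rfl⟩, huv, rfl⟩
    obtain ⟨k, l, hkl⟩ := hlat p hp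
    obtain ⟨k', l', hkl'⟩ := hlat q hq
    have hdiff : e * p - e * q = e * (2 * (d:ℂ) * (((k - k' : ℤ):ℂ) + ((l - l' : ℤ):ℂ) * Complex.I)) := by
      rw [hkl, hkl']; push_cast; ring
    rw [hdiff, NILC_key d hd]
    have hne : ¬((k - k') = 0 ∧ (l - l') = 0) := by
      rintro ⟨h1, h2⟩
      apply huv
      have : k = k' := by omega
      have : l = l' := by omega
      simp [hkl, hkl', ‹k = k'›, ‹l = l'›]
    have h1 : (1:ℤ) ≤ |(k-k')^2 + (k-k')*(l-l') - (l-l')^2| :=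
      Int.one_le_abs (fun h0 => hne (NILC_aux_int _ _ h0))
    have h1R : (1:ℝ) ≤ |(((k-k')^2 + (k-k')*(l-l') - (l-l')^2 : ℤ) : ℝ)| := by
      rw [← Int.cast_abs]; exact_mod_cast h1
    calc 4 * d^2 / Real.sqrt 5 = 4 * d^2 * 1 / Real.sqrt 5 := by ring
    _ ≤ 4 * d^2 * |(((k-k')^2 + (k-k')*(l-l') - (l-l')^2 : ℤ) : ℝ)| / Real.sqrt 5 := by
        gcongr
  -- membership
  have hmem : 4 * d^2 / Real.sqrt 5 ∈ T := by
    obtain ⟨p, hp, q, hq, hpq⟩ := hstep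
    have hpqne : p ≠ q := by
      intro h
      rw [h, sub_self] at hpq
      have hd2 : (2 * (d:ℂ)) ≠ 0 := by
        simp [Complex.ofReal_ne_zero.mpr hd.ne']
      simp only [Set.mem_insert_iff, Set.mem_singleton_iff] at hpq
      rcases hpq with h | h | h | h
      · exact hd2 h.symm
      · exact hd2 (neg_eq_zero.mp h.symm)
      · exact mul_ne_zero hd2 Complex.I_ne_zero h.symm
      · exact mul_ne_zero hd2 Complex.I_ne_zero (neg_eq_zero.mp h.symm)
    refine ⟨e * p, ⟨p, hp, rfl⟩, e * q, ⟨q, hq, rfl⟩,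
      fun h => hpqne (mul_left_cancel₀ hene h), ?_⟩
    have hcase : ∃ m n : ℤ, p - q = 2 * (d:ℂ) * ((m:ℂ) + (n:ℂ) * Complex.I) ∧
        |m^2 + m*n - n^2| = 1 := by
      simp only [Set.mem_insert_iff, Set.mem_singleton_iff] at hpq
      rcases hpq with h | h | h | h
      · exact ⟨1, 0, by rw [h]; push_cast; ring, by norm_num⟩
      · exact ⟨-1, 0, by rw [h]; push_cast; ring, by norm_num⟩
      · exact ⟨0, 1, by rw [h]; push_cast; ring, by norm_num⟩
      · exact ⟨0, -1, by rw [h]; push_cast; ring, by norm_num⟩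
    obtain ⟨m, n, hmn, habs⟩ := hcase
    have : e * p - e * q = e * (2 * (d:ℂ) * ((m:ℂ) + (n:ℂ) * Complex.I)) := by
      rw [← mul_sub, hmn]
    rw [this, NILC_key d hd, ← Int.cast_abs, habs]
    norm_num
  have : CPD ((fun z => e * z) '' S) = sInf T := rfl
  rw [this]
  refine le_antisymm (csInf_le ⟨4 * d^2 / Real.sqrt 5, hlb⟩ hmem) (le_csInf ⟨_, hmem⟩ hlb)
end

section
/- Let N be a positive integer and let a, b ∈ ℂ^N with a ≠ 0. For vectors x, y ∈ ℂ^N let xᴴy denote the N×N matrix whose (p, q) entry is conj(x_p)·y_q (the outer product of the conjugate of x with y). If aᴴb + bᴴa = 0 (as an N×N matrix), then there exists a real number c such that b = (i·c)·a. -/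
open Matrix

/-- If nonzero `a` and `b` in `ℂ^N` satisfy `aᴴb + bᴴa = 0`, where `xᴴy`
denotes the outer product matrix with entries `conj (x p) * y q`, then `b` is
a purely imaginary real multiple of `a`. -/
theorem outer_product_anticommute_imp_imaginary_multiple
    (N : ℕ) (hN : 0 < N) (a b : Fin N → ℂ) (ha : a ≠ 0)
    (h : Matrix.vecMulVec (star a) b + Matrix.vecMulVec (star b) a = 0) :
    ∃ c : ℝ, b = (Complex.I * (c : ℂ)) • a := by
  have H : ∀ p q, star (a p) * b q + star (b p) * a q = 0 := by
    intro p q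
    have := congrFun (congrFun h p) q
    simpa [Matrix.vecMulVec, Matrix.add_apply] using this
  obtain ⟨p, hp⟩ : ∃ p, a p ≠ 0 := by
    by_contra hc
    push_neg at hc
    exact ha (funext hc)
  set lam : ℂ := -(star (b p) / star (a p)) with hlam
  have hsap : star (a p) ≠ 0 := star_ne_zero.mpr hp
  have hb : ∀ q, b q = lam * a q := by
    intro q
    have h0 : star (a p) * b q = -(star (b p) * a q) :=
      eq_neg_of_add_eq_zero_left (H p q)
    have h1 : b q = (star (a p))⁻¹ * (star (a p) * b q) :=
      (inv_mul_cancel_left₀ hsap (b q)).symm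
    rw [h1, h0, hlam]
    field_simp
  have hre : lam + star lam = 0 := by
    have h1 := H p p
    rw [hb p, star_mul'] at h1
    have h3 : (lam + star lam) * (star (a p) * a p) = 0 := by
      linear_combination h1
    have h4 : star (a p) * a p ≠ 0 := mul_ne_zero hsap hp
    exact (mul_eq_zero.mp h3).resolve_right h4
  have hre0 : lam.re = 0 := by
    have := congrArg Complex.re hre
    simp [Complex.add_re] at this
    linarith [this]
  refine ⟨lam.im, funext fun q => ?_⟩
  rw [hb q]
  simp only [Pi.smul_apply, smul_eq_mul]
  congr 1
  rw [mul_comm]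
  exact (Complex.re_add_im lam ▸ by rw [hre0]; simp)
end

section
/- Let N be a positive integer. There do not exist three vectors a, b, c ∈ ℂ^N, each nonzero, such that aᴴb + bᴴa = 0, bᴴc + cᴴb = 0 and aᴴc + cᴴa = 0, where for x, y ∈ ℂ^N, xᴴy denotes the N×N matrix whose (p, q) entry is conj(x_p)·y_q. -/
open Matrix

/-- There do not exist three nonzero vectors in `ℂ^N` whose pairwise outer
products satisfy `xᴴy + yᴴx = 0` (with `xᴴy` the matrix with entries
`conj (x p) * y q`). -/
theorem no_three_pairwise_outer_anticommuting_vectors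
    (N : ℕ) (hN : 0 < N) :
    ¬ ∃ a b c : Fin N → ℂ, a ≠ 0 ∧ b ≠ 0 ∧ c ≠ 0 ∧
      Matrix.vecMulVec (star a) b + Matrix.vecMulVec (star b) a = 0 ∧
      Matrix.vecMulVec (star b) c + Matrix.vecMulVec (star c) b = 0 ∧
      Matrix.vecMulVec (star a) c + Matrix.vecMulVec (star c) a = 0 := by
  rintro ⟨a, b, c, ha, hb, hc, hab, hbc, hac⟩
  obtain ⟨p, hp⟩ := Function.ne_iff.mp ha
  simp only [Pi.zero_apply] at hp
  have Hab : ∀ q r, (starRingEnd ℂ) (a q) * b r + (starRingEnd ℂ) (b q) * a r = 0 := by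
    intro q r
    have h := congrFun (congrFun hab q) r
    simpa [Matrix.vecMulVec_apply, Matrix.add_apply, Complex.star_def] using h
  have Hbc : ∀ q r, (starRingEnd ℂ) (b q) * c r + (starRingEnd ℂ) (c q) * b r = 0 := by
    intro q r
    have h := congrFun (congrFun hbc q) r
    simpa [Matrix.vecMulVec_apply, Matrix.add_apply, Complex.star_def] using h
  have Hac : ∀ q r, (starRingEnd ℂ) (a q) * c r + (starRingEnd ℂ) (c q) * a r = 0 := by
    intro q r
    have h := congrFun (congrFun hac q) r
    simpa [Matrix.vecMulVec_apply, Matrix.add_apply, Complex.star_def] using h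
  set K : ℂ := (starRingEnd ℂ) (a p) with hKdef
  have hK : K ≠ 0 := by
    simpa [hKdef] using hp
  set μ : ℂ := -((starRingEnd ℂ) (b p)) / K with hμdef
  set ν : ℂ := -((starRingEnd ℂ) (c p)) / K with hνdef
  have hbμ : ∀ q, b q = μ * a q := by
    intro q
    have h := Hab p q
    rw [hμdef]
    field_simp
    linear_combination h
  have hcν : ∀ q, c q = ν * a q := by
    intro q
    have h := Hac p q
    rw [hνdef]
    field_simp
    linear_combination h
  have hμ0 : μ ≠ 0 := by
    intro h0
    exact hb (funext fun q => by simp [hbμ q, h0])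
  have hν0 : ν ≠ 0 := by
    intro h0
    exact hc (funext fun q => by simp [hcν q, h0])
  have hKa : K * a p ≠ 0 := mul_ne_zero hK hp
  have hconjμ : (starRingEnd ℂ) μ = -μ := by
    have h := Hab p p
    have hbp := hbμ p
    have hcb : (starRingEnd ℂ) (b p) = (starRingEnd ℂ) μ * K := by
      rw [hbp, RingHom.map_mul, hKdef]
    have key : (μ + (starRingEnd ℂ) μ) * (K * a p) = 0 := by
      linear_combination h - K * hbp - (a p) * hcb
    have h2 := (mul_eq_zero.mp key).resolve_right hKa
    linear_combination h2
  have hconjν : (starRingEnd ℂ) ν = -ν := by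
    have h := Hac p p
    have hcp := hcν p
    have hcc : (starRingEnd ℂ) (c p) = (starRingEnd ℂ) ν * K := by
      rw [hcp, RingHom.map_mul, hKdef]
    have key : (ν + (starRingEnd ℂ) ν) * (K * a p) = 0 := by
      linear_combination h - K * hcp - (a p) * hcc
    have h2 := (mul_eq_zero.mp key).resolve_right hKa
    linear_combination h2
  have hcb : (starRingEnd ℂ) (b p) = -μ * K := by
    rw [hbμ p, RingHom.map_mul, hconjμ, hKdef]
  have hcc : (starRingEnd ℂ) (c p) = -ν * K := by
    rw [hcν p, RingHom.map_mul, hconjν, hKdef]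
  have hz : μ * ν * (K * a p) = 0 := by
    have h := Hbc p p
    rw [hcb, hcc, hbμ p, hcν p] at h
    linear_combination (-(1:ℂ)/2) * h
  rcases mul_eq_zero.mp hz with h | h
  · rcases mul_eq_zero.mp h with h | h
    · exact hμ0 h
    · exact hν0 h
  · exact hKa h
end

section
/- Let L, N, K be positive integers. Let A_0, …, A_{2K−1} be complex matrices with rows indexed by {0, …, L−1} and columns indexed by pairs (t', n) ∈ {0, …, L−1} × {0, …, N−1}, and assume each A_k is block diagonal in the sense that A_k(t, (t', n)) = 0 whenever t ≠ t'. Assume Aᴴ_k·A_l + Aᴴ_l·A_k = 0 for all 0 ≤ k ≠ l ≤ 2K−1, and assume that for every 0 ≤ k ≤ K−1 and every row index t, at least one of the matrices A_{2k}, A_{2k+1} has a nonzero entry in row t. Then K ≤ 2. Hence the rate K/L of a full-diversity single-symbol decodable space–time block code over a rapid-fading channel is at most 2/L. -/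
open Matrix

/-- Rate bound for full-diversity single-symbol decodable STBCs over
rapid-fading channels: if the block-diagonal extended weight matrices
`A 0, …, A (2K−1)` pairwise anticommute in the Gram sense and, for each
complex variable, its pair of extended weight matrices together have a
nonzero entry in every row, then `K ≤ 2` (the rate `K / L` is at most `2/L`). -/
theorem rapid_fading_SSD_rate_bound
    (L N K : ℕ) (hL : 0 < L) (hN : 0 < N) (hK : 0 < K)
    (A : ℕ → Matrix (Fin L) (Fin L × Fin N) ℂ)
    (hblock : ∀ k < 2*K, ∀ (t t' : Fin L) (n : Fin N), t ≠ t' → A k t (t', n) = 0)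
    (hanti : ∀ k l, k < 2*K → l < 2*K → k ≠ l → (A k)ᴴ * A l + (A l)ᴴ * A k = 0)
    (hcover : ∀ k < K, ∀ t : Fin L,
      (∃ c, A (2*k) t c ≠ 0) ∨ (∃ c, A (2*k+1) t c ≠ 0)) :
    K ≤ 2 := by
  by_contra hK2
  have hK3 : 3 ≤ K := by omega
  set t : Fin L := ⟨0, hL⟩ with ht
  -- pointwise anticommutation relation on row t
  have hrel : ∀ j l, j < 2*K → l < 2*K → j ≠ l → ∀ (n m : Fin N),
      (starRingEnd ℂ) (A j t (t, n)) * A l t (t, m)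
        + (starRingEnd ℂ) (A l t (t, n)) * A j t (t, m) = 0 := by
    intro j l hj hl hjl n m
    have h := congrFun (congrFun (hanti j l hj hl hjl) (t, n)) (t, m)
    simp only [Matrix.add_apply, Matrix.mul_apply, Matrix.conjTranspose_apply,
      Matrix.zero_apply] at h
    rw [Finset.sum_eq_single t (fun s _ hs => by
          rw [hblock j hj s t n (by exact hs)]; simp)
        (fun hs => absurd (Finset.mem_univ t) hs),
      Finset.sum_eq_single t (fun s _ hs => by
          rw [hblock l hl s t n (by exact hs)]; simp)
        (fun hs => absurd (Finset.mem_univ t) hs)] at h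
    simpa using h
  -- for each k < K, pick an index in {2k, 2k+1} with a nonzero entry in row t
  have pick : ∀ k < K, ∃ j, (j = 2*k ∨ j = 2*k+1) ∧ ∃ n, A j t (t, n) ≠ 0 := by
    intro k hk
    rcases hcover k hk t with ⟨c, hc⟩ | ⟨c, hc⟩
    · refine ⟨2*k, Or.inl rfl, c.2, ?_⟩
      have hct : c.1 = t := by
        by_contra h
        apply hc
        rw [← Prod.mk.eta (p := c)]
        exact hblock (2*k) (by omega) t c.1 c.2 (fun e => h e.symm)
      have hcc : ((t, c.2) : Fin L × Fin N) = c := Prod.ext hct.symm rfl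
      rw [hcc]
      exact hc
    · refine ⟨2*k+1, Or.inr rfl, c.2, ?_⟩
      have hct : c.1 = t := by
        by_contra h
        apply hc
        rw [← Prod.mk.eta (p := c)]
        exact hblock (2*k+1) (by omega) t c.1 c.2 (fun e => h e.symm)
      have hcc : ((t, c.2) : Fin L × Fin N) = c := Prod.ext hct.symm rfl
      rw [hcc]
      exact hc
  obtain ⟨j0, hj0, n0, hx⟩ := pick 0 (by omega)
  obtain ⟨j1, hj1, n1, hy1⟩ := pick 1 (by omega)
  obtain ⟨j2, hj2, n2, hz2⟩ := pick 2 (by omega)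
  have hj0K : j0 < 2*K := by omega
  have hj1K : j1 < 2*K := by omega
  have hj2K : j2 < 2*K := by omega
  have h01 : j0 ≠ j1 := by omega
  have h02 : j0 ≠ j2 := by omega
  have h12 : j1 ≠ j2 := by omega
  -- the other two matrices are also nonzero at column (t, n0)
  have key : ∀ l m, l < 2*K → j0 ≠ l → A l t (t, m) ≠ 0 → A l t (t, n0) ≠ 0 := by
    intro l m hl hne hm hzero
    have h := hrel j0 l hj0K hl hne n0 m
    rw [hzero] at h
    simp only [map_zero, zero_mul, add_zero] at h
    rcases mul_eq_zero.mp h with h' | h'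
    · exact hx (by simpa using h')
    · exact hm h'
  have hy : A j1 t (t, n0) ≠ 0 := key j1 n1 hj1K h01 hy1
  have hz : A j2 t (t, n0) ≠ 0 := key j2 n2 hj2K h02 hz2
  set x := A j0 t (t, n0)
  set y := A j1 t (t, n0)
  set z := A j2 t (t, n0)
  have e1 := hrel j0 j1 hj0K hj1K h01 n0 n0
  have e2 := hrel j0 j2 hj0K hj2K h02 n0 n0
  have e3 := hrel j1 j2 hj1K hj2K h12 n0 n0
  have hfin : (starRingEnd ℂ) x * y * z = 0 := by
    linear_combination (z * e1 + y * e2 - x * e3) / 2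
  rcases mul_eq_zero.mp hfin with h' | h'
  · rcases mul_eq_zero.mp h' with h'' | h''
    · exact hx (by simpa using h'')
    · exact hy h''
  · exact hz h'
end

section
/- Let r, s be positive integers, put N = r + s, let B be an invertible complex r×r matrix, set A₀ = [[B, 0],[0, 0]] (an N×N matrix in block form with blocks of sizes r and s) and A₁ = I_N − A₀. If a complex N×N matrix D, written in block form D = [[D11, D12],[D21, D22]] with D11 of size r×r and D22 of size s×s, satisfies Aᴴ₀·D + Dᴴ·A₀ = 0 and Aᴴ₁·D + Dᴴ·A₁ = 0, then D12 = 0, D21 = 0, Dᴴ11 = −D11 and Dᴴ22 = −D22; that is, D is block diagonal with skew-Hermitian diagonal blocks. -/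
open Matrix

/-- Block-diagonalization lemma for square RFSDDs: if `A₀ = [[B,0],[0,0]]`
with `B` invertible and `A₁ = I − A₀`, then any matrix
`D = [[D11,D12],[D21,D22]]` with `A₀ᴴ D + Dᴴ A₀ = 0` and `A₁ᴴ D + Dᴴ A₁ = 0`
is block diagonal with skew-Hermitian diagonal blocks. -/
theorem block_diagonal_structure_lemma
    (r s : ℕ) (hr : 0 < r) (hs : 0 < s)
    (B : Matrix (Fin r) (Fin r) ℂ) (hB : IsUnit B)
    (D11 : Matrix (Fin r) (Fin r) ℂ) (D12 : Matrix (Fin r) (Fin s) ℂ)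
    (D21 : Matrix (Fin s) (Fin r) ℂ) (D22 : Matrix (Fin s) (Fin s) ℂ)
    (h0 : (Matrix.fromBlocks B 0 0 0)ᴴ * (Matrix.fromBlocks D11 D12 D21 D22)
        + (Matrix.fromBlocks D11 D12 D21 D22)ᴴ * (Matrix.fromBlocks B 0 0 0) = 0)
    (h1 : ((1 : Matrix (Fin r ⊕ Fin s) (Fin r ⊕ Fin s) ℂ) - Matrix.fromBlocks B 0 0 0)ᴴ
            * (Matrix.fromBlocks D11 D12 D21 D22)
        + (Matrix.fromBlocks D11 D12 D21 D22)ᴴ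
            * ((1 : Matrix (Fin r ⊕ Fin s) (Fin r ⊕ Fin s) ℂ) - Matrix.fromBlocks B 0 0 0) = 0) :
    D12 = 0 ∧ D21 = 0 ∧ D11ᴴ = -D11 ∧ D22ᴴ = -D22 := by
  have hBu : IsUnit Bᴴ := (Matrix.isUnit_conjTranspose B).mpr hB
  have hdet : IsUnit Bᴴ.det := (Matrix.isUnit_iff_isUnit_det _).mp hBu
  -- sum of the two hypotheses gives D + Dᴴ = 0
  have hsum : (Matrix.fromBlocks D11 D12 D21 D22)
      + (Matrix.fromBlocks D11 D12 D21 D22)ᴴ = 0 := by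
    have := congrArg₂ (· + ·) h0 h1
    simp only [add_zero] at this
    calc (Matrix.fromBlocks D11 D12 D21 D22) + (Matrix.fromBlocks D11 D12 D21 D22)ᴴ
        = ((Matrix.fromBlocks B 0 0 0)ᴴ * (Matrix.fromBlocks D11 D12 D21 D22)
        + (Matrix.fromBlocks D11 D12 D21 D22)ᴴ * (Matrix.fromBlocks B 0 0 0))
        + (((1 : Matrix (Fin r ⊕ Fin s) (Fin r ⊕ Fin s) ℂ) - Matrix.fromBlocks B 0 0 0)ᴴ
            * (Matrix.fromBlocks D11 D12 D21 D22)
        + (Matrix.fromBlocks D11 D12 D21 D22)ᴴ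
            * ((1 : Matrix (Fin r ⊕ Fin s) (Fin r ⊕ Fin s) ℂ) - Matrix.fromBlocks B 0 0 0)) := by
          simp only [conjTranspose_sub, sub_mul, mul_sub, conjTranspose_one, one_mul, mul_one]
          abel
      _ = 0 := this
  have hsum' := hsum
  simp only [fromBlocks_conjTranspose, fromBlocks_add, ← fromBlocks_zero,
    fromBlocks_inj] at hsum'
  obtain ⟨e11, e21, e12, e22⟩ := hsum'
  have h0' := h0
  simp only [fromBlocks_conjTranspose, fromBlocks_multiply, fromBlocks_add,
    ← fromBlocks_zero, fromBlocks_inj] at h0'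
  obtain ⟨f11, f12, f21, f22⟩ := h0'
  have hD12 : D12 = 0 := by
    have hf : Bᴴ * D12 = 0 := by simpa using f12
    have h2 : Bᴴ⁻¹ * (Bᴴ * D12) = 0 := by rw [hf, Matrix.mul_zero]
    rwa [← Matrix.mul_assoc, Matrix.nonsing_inv_mul _ hdet, Matrix.one_mul] at h2
  have hD21 : D21 = 0 := by
    have := e12
    rw [hD12] at this
    simpa using this
  exact ⟨hD12, hD21, by linear_combination (norm := abel) e11,
    by linear_combination (norm := abel) e22⟩
end
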